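/- Let $\lambda, \mu > 0$ and let $k$ be a positive integer. The five-dimensional integral $\int_{\mathbb{R}_+^5} \mathbf{1}\{z_1 < z_5\}\,\mathbf{1}\{z_4 > y\}\,\mathbf{1}\{z_1 + z_2 - z_5 - z_3 > y\}\, \frac{\lambda^k z_5^{k-1}}{\Gamma(k)} e^{-\lambda z_5} \mu^4 e^{-\mu(z_1+z_2+z_3+z_4)}\, dz_1\,dz_2\,dz_3\,dz_4\,dz_5$ equals $\frac{\mu k\, e^{-2\mu y}}{2} \cdot \frac{\lambda^k}{(\lambda+\mu)^{k+1}}$ for all $y \geq 0$. -/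

import Mathlib

open MeasureTheory Real

/-!
Swapping the two innermost integrals, the `z2`-integral over `z2 > y + z5 + z3 - z1` produces
`exp (-μ (y + z5 + z3 - z1)) / μ`, which cancels the `z1`-dependence of `exp (-μ z1)`; the
`z1`-integral over `(0, z5)` then contributes the factor `z5`. What remains factorises into
one-dimensional exponential integrals in `z3` and `z4` and the Gamma integral
`∫ z5 ^ k e^{-(λ + μ) z5} = Γ(k + 1) / (λ + μ) ^ (k + 1) = k Γ(k) / (λ + μ) ^ (k + 1)`.
-/

lemma integral_exp_neg_mul_Ioi {c : ℝ} (hc : 0 < c) (a : ℝ) :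
    ∫ x in Set.Ioi a, exp (-(c * x)) = exp (-(c * a)) / c := by
  simpa [neg_mul, neg_div_neg_eq] using integral_exp_mul_Ioi (neg_neg_of_pos hc) a

lemma setIntegral_Ioi_ite_lt {a b : ℝ} (hab : a ≤ b) (f : ℝ → ℝ) :
    ∫ x in Set.Ioi a, (if b < x then f x else 0) = ∫ x in Set.Ioi b, f x := by
  rw [← Set.inter_eq_right.mpr (Set.Ioi_subset_Ioi hab), ← setIntegral_indicator measurableSet_Ioi]
  rfl

lemma setIntegral_Ioi_zero_ite_lt_const {t : ℝ} (ht : 0 ≤ t) (K : ℝ) :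
    ∫ x in Set.Ioi (0 : ℝ), (if x < t then K else 0) = t * K := by
  have h := setIntegral_indicator (μ := volume) (s := Set.Ioi (0:ℝ)) (f := fun _ => K)
    (measurableSet_Iio (a := t))
  rw [Set.Ioi_inter_Iio, setIntegral_const, Real.volume_real_Ioo_of_le ht, sub_zero,
    smul_eq_mul] at h
  rw [← h]
  rfl

lemma integrable_exp_neg_mul_add_ite {c t s : ℝ} (hc : 0 < c) :
    Integrable (Function.uncurry fun u v : ℝ =>
        if v < t ∧ s < v + u then exp (-(c * (v + u))) else 0)
      ((volume.restrict (Set.Ioi 0)).prod (volume.restrict (Set.Ioi 0))) := by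
  have hexp : IntegrableOn (fun x : ℝ => exp (-(c * x))) (Set.Ioi 0) := by
    simpa [neg_mul] using exp_neg_integrableOn_Ioi 0 hc
  have hS : MeasurableSet {p : ℝ × ℝ | p.2 < t ∧ s < p.2 + p.1} :=
    (measurableSet_lt measurable_snd measurable_const).inter
      (measurableSet_lt measurable_const (measurable_snd.add measurable_fst))
  refine ((hexp.mul_prod hexp).indicator hS).congr (Filter.Eventually.of_forall fun p => ?_)
  simp only [Set.indicator_apply, Set.mem_ofPred_eq, Function.uncurry, ← exp_add, mul_add,
    neg_add, add_comm]

lemma integral_integral_exp_neg_mul_add_ite {c t s : ℝ} (hc : 0 < c) (ht : 0 ≤ t) (hts : t ≤ s) :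
    ∫ u in Set.Ioi (0 : ℝ), ∫ v in Set.Ioi (0 : ℝ),
        (if v < t ∧ s < v + u then exp (-(c * (v + u))) else 0) = t * (exp (-(c * s)) / c) := by
  rw [integral_integral_swap (integrable_exp_neg_mul_add_ite hc),
    ← setIntegral_Ioi_zero_ite_lt_const ht]
  refine setIntegral_congr_fun measurableSet_Ioi fun v _ => ?_
  by_cases hvt : v < t
  · simp only [hvt, true_and, if_true, ← sub_lt_iff_lt_add']
    rw [setIntegral_Ioi_ite_lt (by linarith)]
    simp only [mul_add, neg_add, exp_add]
    rw [integral_const_mul, integral_exp_neg_mul_Ioi hc, mul_div_assoc', ← exp_add]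
    ring_nf
  · simp only [hvt, false_and, if_false, integral_zero]

lemma integral_pow_mul_exp_neg_mul_Ioi {c : ℝ} (hc : 0 < c) (n : ℕ) :
    ∫ x in Set.Ioi (0 : ℝ), x ^ n * exp (-(c * x)) = Gamma (n + 1) / c ^ (n + 1) := by
  have h := integral_rpow_mul_exp_neg_mul_Ioi (a := n + 1) (by positivity) hc
  simp only [add_sub_cancel_right, rpow_natCast] at h
  rw [h, ← rpow_natCast, Nat.cast_add_one, one_div, inv_rpow hc.le]
  ring

lemma tandem_inner_integral (lam : ℝ) {mu : ℝ} (hmu : 0 < mu) (k : ℕ) {y : ℝ} (hy : 0 ≤ y)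
    {z3 z5 : ℝ} (hz3 : 0 ≤ z3) (hz5 : 0 ≤ z5) (z4 : ℝ) :
    ∫ z2 in Set.Ioi (0:ℝ), ∫ z1 in Set.Ioi (0:ℝ),
        (if z1 < z5 ∧ z4 > y ∧ z1 + z2 - z5 - z3 > y then
          lam ^ k * z5 ^ (k - 1) / Gamma k * exp (-(lam * z5)) *
            mu ^ 4 * exp (-(mu * (z1 + z2 + z3 + z4)))
        else 0) =
      lam ^ k / Gamma k * mu ^ 3 * exp (-(mu * y)) *
        (z5 ^ (k - 1) * z5 * exp (-((lam + mu) * z5))) *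
        (if y < z4 then exp (-(mu * z4)) else 0) * exp (-(2 * mu * z3)) := by
  have hfactor : ∀ z1 z2 : ℝ,
      (if z1 < z5 ∧ z4 > y ∧ z1 + z2 - z5 - z3 > y then
          lam ^ k * z5 ^ (k - 1) / Gamma k * exp (-(lam * z5)) *
            mu ^ 4 * exp (-(mu * (z1 + z2 + z3 + z4)))
        else 0) =
      (if y < z4 then
          lam ^ k * z5 ^ (k - 1) / Gamma k * exp (-(lam * z5)) * mu ^ 4 * exp (-(mu * (z3 + z4)))
        else 0) *
      (if z1 < z5 ∧ y + z5 + z3 < z1 + z2 then exp (-(mu * (z1 + z2))) else 0) := by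
    intro z1 z2
    have hz2 : z1 + z2 - z5 - z3 > y ↔ y + z5 + z3 < z1 + z2 := by constructor <;> intro <;> linarith
    by_cases h4 : y < z4
    · simp only [gt_iff_lt, h4, true_and, ← hz2, if_true]
      split_ifs
      · rw [mul_assoc _ (exp (-(mu * (z3 + z4)))), ← exp_add]
        ring_nf
      · rw [mul_zero]
    · simp only [gt_iff_lt, h4, false_and, and_false, if_false, zero_mul]
  simp_rw [hfactor, integral_const_mul]
  rw [integral_integral_exp_neg_mul_add_ite hmu hz5 (by linarith)]
  split_ifs
  · have he : exp (-(lam * z5)) * exp (-(mu * (z3 + z4))) * exp (-(mu * (y + z5 + z3))) =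
        exp (-(mu * y)) * exp (-((lam + mu) * z5)) * exp (-(mu * z4)) * exp (-(2 * mu * z3)) := by
      simp only [← exp_add]
      ring_nf
    calc _ = lam ^ k * z5 ^ (k - 1) / Gamma k * mu ^ 4 * z5 / mu *
          (exp (-(lam * z5)) * exp (-(mu * (z3 + z4))) * exp (-(mu * (y + z5 + z3)))) := by ring
      _ = _ := by
        rw [he]
        field_simp
  · simp only [mul_zero, zero_mul]

theorem tandem_zero_first_overlap (lam mu : ℝ) (hlam : 0 < lam) (hmu : 0 < mu)
    (k : ℕ) (hk : 1 ≤ k) (y : ℝ) (hy : 0 ≤ y) :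
    (∫ z5 in Set.Ioi (0:ℝ), ∫ z4 in Set.Ioi (0:ℝ), ∫ z3 in Set.Ioi (0:ℝ),
      ∫ z2 in Set.Ioi (0:ℝ), ∫ z1 in Set.Ioi (0:ℝ),
        (if z1 < z5 ∧ z4 > y ∧ z1 + z2 - z5 - z3 > y then
          lam ^ k * z5 ^ (k - 1) / Real.Gamma k * Real.exp (-(lam * z5)) *
            mu ^ 4 * Real.exp (-(mu * (z1 + z2 + z3 + z4)))
        else 0)) =
      mu * k * Real.exp (-(2 * mu * y)) / 2 * (lam ^ k / (lam + mu) ^ (k + 1)) := by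
  have hk0 : k ≠ 0 := by omega
  set C := lam ^ k / Gamma k * mu ^ 3 * exp (-(mu * y)) with hC
  calc _ = ∫ z5 in Set.Ioi (0:ℝ), ∫ z4 in Set.Ioi (0:ℝ), ∫ z3 in Set.Ioi (0:ℝ),
          C * (z5 ^ k * exp (-((lam + mu) * z5))) * (if y < z4 then exp (-(mu * z4)) else 0) *
            exp (-(2 * mu * z3)) := by
        refine setIntegral_congr_fun measurableSet_Ioi fun z5 hz5 =>
          setIntegral_congr_fun measurableSet_Ioi fun z4 _ =>
          setIntegral_congr_fun measurableSet_Ioi fun z3 hz3 => ?_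
        rw [tandem_inner_integral lam hmu k hy (le_of_lt hz3) (le_of_lt hz5), pow_sub_one_mul hk0]
    _ = C * (∫ z5 in Set.Ioi (0:ℝ), z5 ^ k * exp (-((lam + mu) * z5))) *
          (∫ z4 in Set.Ioi (0:ℝ), if y < z4 then exp (-(mu * z4)) else 0) *
          ∫ z3 in Set.Ioi (0:ℝ), exp (-(2 * mu * z3)) := by
        simp only [integral_mul_const, integral_const_mul]
    _ = C * (Gamma (k + 1) / (lam + mu) ^ (k + 1)) * (exp (-(mu * y)) / mu) *
          (exp (-(2 * mu * 0)) / (2 * mu)) := by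
        rw [integral_pow_mul_exp_neg_mul_Ioi (by linarith), setIntegral_Ioi_ite_lt hy,
          integral_exp_neg_mul_Ioi hmu, integral_exp_neg_mul_Ioi (by linarith)]
    _ = _ := by
        have hΓ : Gamma k ≠ 0 := (Gamma_pos_of_pos (by exact_mod_cast hk)).ne'
        rw [Gamma_add_one (by exact_mod_cast hk0), show 2 * mu * y = mu * y + mu * y by ring,
          neg_add, exp_add, mul_zero, neg_zero, exp_zero, hC]
        field_simp
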